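/- arXiv:math/0412131 — 3 statements merged into one kernel-verified Lean document; each statement's English description precedes it below -/
import Mathlib

section
/- Let G be a Hausdorff topological group, let t ∈ G, and let K ⊆ G be a nonempty compact subset such that t·K = K (where t·K = {t*k : k ∈ K} is the left translate). Then the topological closure of the subgroup of G generated by t is compact. -/
/-- If `G` is a Hausdorff topological group, `t ∈ G`, and `K ⊆ G` is a nonempty compact
subset with `t·K = K`, then the topological closure of the subgroup generated by `t`
is compact. -/
theorem closure_zpowers_compact_of_invariant_compact
    {G : Type*} [Group G] [TopologicalSpace G] [IsTopologicalGroup G] [T2Space G]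
    (t : G) (K : Set G) (hne : K.Nonempty) (hK : IsCompact K)
    (hinv : (fun k => t * k) '' K = K) :
    IsCompact ((Subgroup.zpowers t).topologicalClosure : Set G) := by
  obtain ⟨k, hk⟩ := hne
  -- t⁻¹ also leaves K invariant
  have hinv' : (fun x => t⁻¹ * x) '' K = K := by
    conv_lhs => rw [← hinv]
    rw [← Set.image_comp]
    simp [Function.comp]
  -- all integer powers of t send k into K
  have hmem : ∀ n : ℤ, t ^ n * k ∈ K := by
    intro n
    induction n using Int.induction_on with
    | zero => simpa using hk
    | succ n ih =>
        have : t * (t ^ (n : ℤ) * k) ∈ K := by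
          rw [← hinv]; exact Set.mem_image_of_mem _ ih
        have e : t ^ ((n : ℤ) + 1) * k = t * (t ^ (n : ℤ) * k) := by group
        rwa [e]
    | pred n ih =>
        have : t⁻¹ * (t ^ (-(n : ℤ)) * k) ∈ K := by
          rw [← hinv']; exact Set.mem_image_of_mem _ ih
        have e : t ^ (-(n : ℤ) - 1) * k = t⁻¹ * (t ^ (-(n : ℤ)) * k) := by group
        rwa [e]
  -- zpowers t ⊆ K * k⁻¹, a compact set
  have hKk : IsCompact ((fun x => x * k⁻¹) '' K) :=
    hK.image (continuous_mul_right k⁻¹)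
  have hsub : (Subgroup.zpowers t : Set G) ⊆ (fun x => x * k⁻¹) '' K := by
    rintro x ⟨n, rfl⟩
    exact ⟨t ^ n * k, hmem n, by group⟩
  have hclsub : ((Subgroup.zpowers t).topologicalClosure : Set G) ⊆
      (fun x => x * k⁻¹) '' K := by
    have : closure (Subgroup.zpowers t : Set G) ⊆ (fun x => x * k⁻¹) '' K :=
      closure_minimal hsub hKk.isClosed
    exact this
  exact hKk.of_isClosed_subset
    (Subgroup.isClosed_topologicalClosure _) hclsub
end

section
/- Let V be a complex vector space, T : V → V a linear map, and k a positive integer. Consider the subspace W = {m ∈ V : T^k m = m and ∑_{j=0}^{k−1} T^j m = 0}. Then id − T maps W into W, and the restriction of id − T to W is a linear bijection of W onto itself. -/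
/-!
On `W` the average `∑_{j<k} T^j` vanishes and `T^k = 1`. If `(1 - T) m = 0` then `T` fixes `m`,
so the vanishing average is `k • m = 0`. For surjectivity, the ring identity
`(1 - T) ∑_{j<k} (j + 1) T^j = ∑_{j<k} T^j - k T^k` evaluates on `W` to `-k • m`, so
`-k⁻¹ ∑_{j<k} (j + 1) T^j m` is a preimage of `m`; it lies in `W` because every polynomial
in `T` preserves `W`.
-/

open Finset Set

theorem one_sub_mul_sum_range_succ_nsmul_pow {R : Type*} [Ring R] (x : R) (k : ℕ) :
    (1 - x) * ∑ j ∈ range k, (j + 1) • x ^ j = ∑ j ∈ range k, x ^ j - k • x ^ k := by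
  induction k with
  | zero => simp
  | succ k ih =>
    rw [sum_range_succ, mul_add, ih, sum_range_succ, mul_smul_comm, sub_mul, one_mul, ← pow_succ',
      smul_sub, succ_nsmul]
    abel

namespace Module.End

theorem mapsTo_ker_of_commute {R M : Type*} [Semiring R] [AddCommMonoid M] [Module R M]
    {f g : Module.End R M} (h : Commute f g) : MapsTo f (LinearMap.ker g) (LinearMap.ker g) := by
  intro x hx
  rw [SetLike.mem_coe, LinearMap.mem_ker] at hx ⊢
  rw [← mul_apply, ← h.eq, mul_apply, hx, map_zero]

variable {K V : Type*} [DivisionRing K] [AddCommGroup V] [Module K V]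

def kerAverageOfPeriod (T : Module.End K V) (k : ℕ) : Submodule K V :=
  LinearMap.ker (T ^ k - 1) ⊓ LinearMap.ker (∑ j ∈ range k, T ^ j)

variable {T : Module.End K V} {k : ℕ}

theorem mem_kerAverageOfPeriod {m : V} :
    m ∈ kerAverageOfPeriod T k ↔ (T ^ k) m = m ∧ ∑ j ∈ range k, (T ^ j) m = 0 := by
  simp [kerAverageOfPeriod, sub_eq_zero, LinearMap.sum_apply]

theorem mapsTo_kerAverageOfPeriod {f : Module.End K V} (h : Commute f T) :
    MapsTo f (kerAverageOfPeriod T k : Set V) (kerAverageOfPeriod T k) :=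
  (mapsTo_ker_of_commute ((h.pow_right k).sub_right (Commute.one_right f))).inter_inter
    (mapsTo_ker_of_commute (Commute.sum_right _ _ _ fun j _ => h.pow_right j))

theorem eq_zero_of_apply_eq_self_of_sum_pow_apply_eq_zero (hk : (k : K) ≠ 0) {m : V}
    (hTm : T m = m) (hsum : ∑ j ∈ range k, (T ^ j) m = 0) : m = 0 := by
  have hpow : ∀ j, (T ^ j) m = m := fun j => by rw [pow_apply, Function.iterate_fixed hTm]
  simp only [hpow, sum_const, card_range, ← Nat.cast_smul_eq_nsmul K] at hsum
  exact (smul_eq_zero.mp hsum).resolve_left hk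

theorem injOn_one_sub_kerAverageOfPeriod (hk : (k : K) ≠ 0) :
    InjOn (1 - T : Module.End K V) (kerAverageOfPeriod T k : Set V) := by
  intro a ha b hb hab
  have hd := (mem_kerAverageOfPeriod.mp (Submodule.sub_mem _ ha hb)).2
  rw [← sub_eq_zero, ← map_sub, LinearMap.sub_apply, one_apply, sub_eq_zero] at hab
  exact sub_eq_zero.mp (eq_zero_of_apply_eq_self_of_sum_pow_apply_eq_zero hk hab.symm hd)

theorem surjOn_one_sub_kerAverageOfPeriod (hk : (k : K) ≠ 0) :
    SurjOn (1 - T : Module.End K V) (kerAverageOfPeriod T k : Set V) (kerAverageOfPeriod T k) := by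
  intro m hm
  set N : Module.End K V := ∑ j ∈ range k, (j + 1) • T ^ j
  have hN : (1 - T) (N m) = -(k : K) • m := by
    obtain ⟨hper, hsum⟩ := mem_kerAverageOfPeriod.mp hm
    rw [← mul_apply, one_sub_mul_sum_range_succ_nsmul_pow, LinearMap.sub_apply,
      LinearMap.sum_apply, hsum, LinearMap.smul_apply, hper, zero_sub, neg_smul,
      Nat.cast_smul_eq_nsmul]
  have hNT : Commute N T :=
    Commute.sum_left _ _ _ fun j _ => (Commute.self_pow T j).symm.smul_left _
  refine ⟨-(k : K)⁻¹ • N m, Submodule.smul_mem _ _ (mapsTo_kerAverageOfPeriod hNT hm), ?_⟩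
  rw [map_smul, hN, smul_smul, neg_mul_neg, inv_mul_cancel₀ hk, one_smul]

theorem bijOn_one_sub_kerAverageOfPeriod (hk : (k : K) ≠ 0) :
    BijOn (1 - T : Module.End K V) (kerAverageOfPeriod T k : Set V) (kerAverageOfPeriod T k) :=
  ⟨mapsTo_kerAverageOfPeriod ((Commute.one_left T).sub_left (Commute.refl T)),
    injOn_one_sub_kerAverageOfPeriod hk, surjOn_one_sub_kerAverageOfPeriod hk⟩

end Module.End

/-- Let `V` be a complex vector space, `T : V → V` linear and `k > 0`. On the subspace
`W = {m | T^k m = m ∧ ∑_{j<k} T^j m = 0}`, the map `id − T` maps `W` into `W` and restricts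
to a bijection of `W` onto itself. -/
theorem id_sub_bijOn_kernel_of_average
    {V : Type*} [AddCommGroup V] [Module ℂ V] (T : V →ₗ[ℂ] V) (k : ℕ) (hk : 0 < k) :
    Set.MapsTo ((LinearMap.id - T : V →ₗ[ℂ] V))
        {m : V | (T ^ k) m = m ∧ ∑ j ∈ Finset.range k, (T ^ j) m = 0}
        {m : V | (T ^ k) m = m ∧ ∑ j ∈ Finset.range k, (T ^ j) m = 0} ∧
      Set.BijOn ((LinearMap.id - T : V →ₗ[ℂ] V))
        {m : V | (T ^ k) m = m ∧ ∑ j ∈ Finset.range k, (T ^ j) m = 0}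
        {m : V | (T ^ k) m = m ∧ ∑ j ∈ Finset.range k, (T ^ j) m = 0} := by
  have hW : {m : V | (T ^ k) m = m ∧ ∑ j ∈ Finset.range k, (T ^ j) m = 0} =
      Module.End.kerAverageOfPeriod T k := by
    ext m
    exact Module.End.mem_kerAverageOfPeriod.symm
  have hbij := Module.End.bijOn_one_sub_kerAverageOfPeriod (T := T) (Nat.cast_ne_zero.mpr hk.ne')
  rw [hW]
  exact ⟨hbij.mapsTo, hbij⟩
end

section
/- Let f₁, f₂ : ℝ → ℂ be smooth functions and ε > 0 such that f₁ and f₂ are constant on the interval [0,ε), and suppose f₁(0) = f₂(0). Then there exist a smooth function f : ℝ × ℝ → ℂ and δ > 0 such that: (a) f(x,0) = f₁(x) for all x ≥ 0 and f(0,y) = f₂(y) for all y ≥ 0; (b) the partial derivative of f with respect to the second variable vanishes at every point (x,y) with x ≥ 0 and 0 ≤ y < δ, and the partial derivative of f with respect to the first variable vanishes at every point (x,y) with y ≥ 0 and 0 ≤ x < δ. -/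
lemma aux_deriv_zero (g : ℝ → ℂ) (hg : Differentiable ℝ g) (ε : ℝ)
    (hc : ∀ x : ℝ, 0 ≤ x → x < ε → g x = g 0) (y : ℝ) (h0 : 0 ≤ y) (h1 : y < ε) :
    deriv g y = 0 := by
  have h1' : HasDerivWithinAt g (deriv g y) (Set.Ici y) y :=
    (hg y).hasDerivAt.hasDerivWithinAt
  have hmem : Set.Ico y ε ∈ nhdsWithin y (Set.Ici y) := by
    rw [show Set.Ico y ε = Set.Ici y ∩ Set.Iio ε from rfl]
    exact Filter.inter_mem self_mem_nhdsWithin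
      (nhdsWithin_le_nhds (Iio_mem_nhds h1))
  have heq : (fun _ : ℝ => g 0) =ᶠ[nhdsWithin y (Set.Ici y)] g := by
    filter_upwards [hmem] with x hx
    exact (hc x (le_trans h0 hx.1) hx.2).symm
  have h2 : HasDerivWithinAt g 0 (Set.Ici y) y := by
    have := (hasDerivWithinAt_const y (Set.Ici y) (g 0))
    exact this.congr_of_eventuallyEq heq.symm (hc y h0 h1)
  have u := uniqueDiffOn_Ici y y Set.self_mem_Ici
  have e1 := h1'.derivWithin u
  have e2 := h2.derivWithin u
  rw [← e1, e2]

/-- The lifting problem for a corner of the 2-simplex: given smooth `f₁ f₂ : ℝ → ℂ`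
constant on `[0,ε)` with `f₁ 0 = f₂ 0`, there is a smooth `f : ℝ × ℝ → ℂ` agreeing with
`f₁` on the nonnegative first axis and with `f₂` on the nonnegative second axis, and
whose transversal partial derivatives vanish in a strip of width `δ > 0` along each
boundary half-axis of the corner. -/
theorem corner_lifting_two_simplex
    (f₁ f₂ : ℝ → ℂ) (hf₁ : ContDiff ℝ (⊤ : ℕ∞) f₁) (hf₂ : ContDiff ℝ (⊤ : ℕ∞) f₂)
    (ε : ℝ) (hε : 0 < ε)
    (hc₁ : ∀ x : ℝ, 0 ≤ x → x < ε → f₁ x = f₁ 0)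
    (hc₂ : ∀ y : ℝ, 0 ≤ y → y < ε → f₂ y = f₂ 0)
    (h0 : f₁ 0 = f₂ 0) :
    ∃ (f : ℝ × ℝ → ℂ) (δ : ℝ), 0 < δ ∧ ContDiff ℝ (⊤ : ℕ∞) f ∧
      (∀ x : ℝ, 0 ≤ x → f (x, 0) = f₁ x) ∧
      (∀ y : ℝ, 0 ≤ y → f (0, y) = f₂ y) ∧
      (∀ x y : ℝ, 0 ≤ x → 0 ≤ y → y < δ → deriv (fun y' => f (x, y')) y = 0) ∧
      (∀ x y : ℝ, 0 ≤ y → 0 ≤ x → x < δ → deriv (fun x' => f (x', y)) x = 0) := by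
  refine ⟨fun p => f₁ p.1 + f₂ p.2 - f₁ 0, ε, hε, ?_, ?_, ?_, ?_, ?_⟩
  · exact ((hf₁.comp contDiff_fst).add (hf₂.comp contDiff_snd)).sub contDiff_const
  · intro x hx
    have h2 : f₂ 0 = f₁ 0 := h0.symm
    simp [h2]
  · intro y hy; simp
  · intro x y hx hy hyε
    have : (fun y' => f₁ x + f₂ y' - f₁ 0) = fun y' => f₂ y' + (f₁ x - f₁ 0) := by
      funext y'; ring
    rw [this, deriv_add_const]
    exact aux_deriv_zero f₂ (hf₂.differentiable (by simp)) ε hc₂ y hy hyε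
  · intro x y hy hx hxε
    have : (fun x' => f₁ x' + f₂ y - f₁ 0) = fun x' => f₁ x' + (f₂ y - f₁ 0) := by
      funext x'; ring
    rw [this, deriv_add_const]
    exact aux_deriv_zero f₁ (hf₁.differentiable (by simp)) ε hc₁ x hx hxε
end
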